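/- Let S and T be disjoint finite sets and let a, b ≥ 1 with a ≤ |S| and b ≤ |T|. Then the family (S choose a) × (T choose b) can be exactly covered using at most f_a(|S|) · f_b(|T|) complete (a+b)-partite (a+b)-graphs on S ∪ T. -/

import Mathlib

/-- A complete `r`-partite `r`-graph (a "block") on a finite vertex set `V ⊆ ℕ`:
it is determined by `r` pairwise disjoint nonempty subsets of `V`. -/
structure Block (V : Finset ℕ) (r : ℕ) where
  parts : Fin r → Finset ℕ
  nonempty : ∀ i, (parts i).Nonempty
  subset : ∀ i, parts i ⊆ V
  disj : ∀ i j, i ≠ j → Disjoint (parts i) (parts j)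

/-- The edge set of a block: all sets contained in the union of the parts
meeting each part in exactly one vertex. -/
def Block.edges {V : Finset ℕ} {r : ℕ} (B : Block V r) : Set (Finset ℕ) :=
  {X | (∀ i, (X ∩ B.parts i).card = 1) ∧ ∀ x ∈ X, ∃ i, x ∈ B.parts i}

/-- `ExactCover V r k F` : there are `k` complete `r`-partite `r`-graphs on `V`
whose edge sets are pairwise disjoint and whose union is the family `F`. -/
def ExactCover (V : Finset ℕ) (r k : ℕ) (F : Set (Finset ℕ)) : Prop :=
  ∃ B : Fin k → Block V r,
    (∀ i j, i ≠ j → Disjoint (B i).edges (B j).edges) ∧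
    (⋃ i, (B i).edges) = F

/-- `f r n` : the minimum number of complete `r`-partite `r`-graphs needed to
partition the edge set of the complete `r`-uniform hypergraph on `[n]`. -/
noncomputable def f (r n : ℕ) : ℕ :=
  sInf {k | ExactCover (Finset.range n) r k
    {X | X ⊆ Finset.range n ∧ X.card = r}}

/-! Relabelling `[|S|]` onto `S` and `[|T|]` onto `T` turns optimal partitions of the complete
`a`- and `b`-graphs into exact covers of `(S choose a)` by `f_a(|S|)` blocks and of `(T choose b)`
by `f_b(|T|)` blocks. Since `S` and `T` are disjoint, concatenating the parts of a block `B` on `S`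
with those of a block `C` on `T` gives a block on `S ∪ T` whose edges are the `X` with `X ∩ S` an
edge of `B` and `X ∩ T` an edge of `C`; the `f_a(|S|) · f_b(|T|)` blocks so obtained from all
pairs exactly cover `(S choose a) × (T choose b)`. -/

open Finset

namespace Block

variable {V S T : Finset ℕ} {r a b : ℕ}

lemma subset_of_mem_edges (B : Block V r) {X : Finset ℕ} (hX : X ∈ B.edges) : X ⊆ V := by
  intro x hx
  obtain ⟨i, hi⟩ := hX.2 x hx
  exact B.subset i hi

def singletons (X : Finset ℕ) (hXV : X ⊆ V) (hX : #X = r) : Block V r where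
  parts i := {X.orderEmbOfFin hX i}
  nonempty _ := singleton_nonempty _
  subset i := singleton_subset_iff.2 (hXV (X.orderEmbOfFin_mem hX i))
  disj _ _ hij := disjoint_singleton.2 ((X.orderEmbOfFin hX).injective.ne hij)

lemma edges_singletons (X : Finset ℕ) (hXV : X ⊆ V) (hX : #X = r) :
    (singletons X hXV hX).edges = {X} := by
  have hrange : ∀ x, x ∈ X ↔ ∃ i, X.orderEmbOfFin hX i = x := fun x => by
    rw [← Set.mem_range, range_orderEmbOfFin, mem_coe]
  ext Y
  simp only [Block.edges, singletons, Set.mem_ofPred_eq, Set.mem_singleton_iff,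
    card_eq_one, inter_singleton, mem_singleton]
  constructor
  · rintro ⟨hcard, hcover⟩
    have hmem : ∀ i, X.orderEmbOfFin hX i ∈ Y := fun i => by
      by_contra h
      simpa [h] using hcard i
    ext x
    rw [hrange]
    constructor
    · intro hx
      obtain ⟨i, rfl⟩ := hcover x hx
      exact ⟨i, rfl⟩
    · rintro ⟨i, rfl⟩
      exact hmem i
  · intro hYX
    subst hYX
    refine ⟨fun i => ⟨_, if_pos (Y.orderEmbOfFin_mem hX i)⟩, fun x hx => ?_⟩
    obtain ⟨i, rfl⟩ := (hrange x).1 hx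
    exact ⟨i, rfl⟩

def map (g : ℕ ↪ ℕ) (B : Block V r) : Block (V.map g) r where
  parts i := (B.parts i).map g
  nonempty i := (B.nonempty i).map
  subset i := map_subset_map.2 (B.subset i)
  disj i j hij := (disjoint_map g).2 (B.disj i j hij)

lemma map_mem_edges_map_iff (g : ℕ ↪ ℕ) (B : Block V r) {Y : Finset ℕ} :
    Y.map g ∈ (B.map g).edges ↔ Y ∈ B.edges := by
  simp [Block.edges, Block.map, ← map_inter, card_map]

lemma edges_map (g : ℕ ↪ ℕ) (B : Block V r) :
    (B.map g).edges = Finset.map g '' B.edges := by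
  ext X
  constructor
  · intro hX
    obtain ⟨Y, -, rfl⟩ := subset_map_iff.1 ((B.map g).subset_of_mem_edges hX)
    exact ⟨Y, (map_mem_edges_map_iff g B).1 hX, rfl⟩
  · rintro ⟨Y, hY, rfl⟩
    exact (map_mem_edges_map_iff g B).2 hY

def append (B : Block S a) (C : Block T b) (hST : Disjoint S T) : Block (S ∪ T) (a + b) where
  parts := Fin.append B.parts C.parts
  nonempty := Fin.addCases (by simpa using B.nonempty) (by simpa using C.nonempty)
  subset := Fin.addCases (by simpa using fun i => (B.subset i).trans subset_union_left)
    (by simpa using fun j => (C.subset j).trans subset_union_right)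
  disj := by
    refine Fin.addCases (fun i => Fin.addCases (fun i' h => ?_) (fun j' _ => ?_))
      (fun j => Fin.addCases (fun i' _ => ?_) (fun j' h => ?_)) <;>
      simp only [Fin.append_left, Fin.append_right]
    · exact B.disj i i' (fun hii' => h (congrArg _ hii'))
    · exact hST.mono (B.subset i) (C.subset j')
    · exact hST.symm.mono (C.subset j) (B.subset i')
    · exact C.disj j j' (fun hjj' => h (congrArg _ hjj'))

lemma mem_edges_append (B : Block S a) (C : Block T b) (hST : Disjoint S T) {X : Finset ℕ} :
    X ∈ (B.append C hST).edges ↔ X ⊆ S ∪ T ∧ X ∩ S ∈ B.edges ∧ X ∩ T ∈ C.edges := by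
  have hB : ∀ i, X ∩ S ∩ B.parts i = X ∩ B.parts i := fun i =>
    by rw [inter_assoc, inter_eq_right.2 (B.subset i)]
  have hC : ∀ j, X ∩ T ∩ C.parts j = X ∩ C.parts j := fun j =>
    by rw [inter_assoc, inter_eq_right.2 (C.subset j)]
  have hcover : (∀ x ∈ X, ∃ i, x ∈ Fin.append B.parts C.parts i) ↔
      ∀ x ∈ X, (∃ i, x ∈ B.parts i) ∨ ∃ j, x ∈ C.parts j := by
    refine forall₂_congr fun x _ => ⟨fun ⟨i, hi⟩ => ?_, ?_⟩
    · induction i using Fin.addCases with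
      | left i => exact .inl ⟨i, by simpa using hi⟩
      | right j => exact .inr ⟨j, by simpa using hi⟩
    · rintro (⟨i, hi⟩ | ⟨j, hj⟩)
      · exact ⟨Fin.castAdd b i, by simpa using hi⟩
      · exact ⟨Fin.natAdd a j, by simpa using hj⟩
  have hBS : ∀ x, (∃ i, x ∈ B.parts i) → x ∈ S := fun x ⟨i, hi⟩ => B.subset i hi
  have hCT : ∀ x, (∃ j, x ∈ C.parts j) → x ∈ T := fun x ⟨j, hj⟩ => C.subset j hj
  simp only [Block.edges, Set.mem_ofPred_eq, hB, hC, hcover, Fin.forall_fin_add, Block.append,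
    Fin.append_left, Fin.append_right, mem_inter, and_imp]
  constructor
  · rintro ⟨⟨hBcard, hCcard⟩, hXcover⟩
    refine ⟨fun x hx => ?_, ⟨hBcard, fun x hx hxS => ?_⟩, hCcard, fun x hx hxT => ?_⟩
    · rcases hXcover x hx with h | h
      exacts [mem_union_left _ (hBS x h), mem_union_right _ (hCT x h)]
    · exact (hXcover x hx).resolve_right fun h => disjoint_left.1 hST hxS (hCT x h)
    · exact (hXcover x hx).resolve_left fun h => disjoint_left.1 hST (hBS x h) hxT
  · rintro ⟨hXST, ⟨hBcard, hBcover⟩, hCcard, hCcover⟩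
    refine ⟨⟨hBcard, hCcard⟩, fun x hx => ?_⟩
    rcases mem_union.1 (hXST hx) with hxS | hxT
    exacts [.inl (hBcover x hx hxS), .inr (hCcover x hx hxT)]

end Block

namespace ExactCover

lemma powersetCard (V : Finset ℕ) (r : ℕ) :
    ExactCover V r #(V.powersetCard r) {X | X ⊆ V ∧ #X = r} := by
  let e := (V.powersetCard r).equivFin.symm
  have he : ∀ i, (e i : Finset ℕ) ⊆ V ∧ #(e i : Finset ℕ) = r := fun i =>
    mem_powersetCard.1 (e i).2
  refine ⟨fun i => Block.singletons _ (he i).1 (he i).2, fun i j hij => ?_, ?_⟩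
  · simpa [Block.edges_singletons] using fun h => hij (e.injective (Subtype.ext h))
  · ext X
    simp only [Block.edges_singletons, Set.mem_iUnion, Set.mem_singleton_iff, Set.mem_ofPred_eq]
    refine ⟨fun ⟨i, hi⟩ => hi ▸ he i, fun hX => ?_⟩
    exact ⟨e.symm ⟨X, mem_powersetCard.2 hX⟩, by simp⟩

lemma map {V : Finset ℕ} {r k : ℕ} {F : Set (Finset ℕ)} (g : ℕ ↪ ℕ)
    (h : ExactCover V r k F) : ExactCover (V.map g) r k (Finset.map g '' F) := by
  obtain ⟨B, hdisj, hunion⟩ := h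
  refine ⟨fun i => (B i).map g, fun i j hij => ?_, ?_⟩
  · simpa only [Block.edges_map, Set.disjoint_image_iff (map_injective g)] using hdisj i j hij
  · simp only [Block.edges_map, ← Set.image_iUnion, hunion]

lemma append {S T : Finset ℕ} {a b k l : ℕ} {F G : Set (Finset ℕ)} (hST : Disjoint S T)
    (hF : ExactCover S a k F) (hG : ExactCover T b l G) :
    ExactCover (S ∪ T) (a + b) (k * l) {X | X ⊆ S ∪ T ∧ X ∩ S ∈ F ∧ X ∩ T ∈ G} := by
  obtain ⟨B, hBdisj, hBunion⟩ := hF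
  obtain ⟨C, hCdisj, hCunion⟩ := hG
  let e : Fin (k * l) ≃ Fin k × Fin l := finProdFinEquiv.symm
  refine ⟨fun i => (B (e i).1).append (C (e i).2) hST, fun i j hij => ?_, ?_⟩
  · refine Set.disjoint_left.2 fun X hXi hXj => ?_
    rw [Block.mem_edges_append] at hXi hXj
    by_cases h₁ : (e i).1 = (e j).1
    · have h₂ : (e i).2 ≠ (e j).2 := fun h₂ => hij (e.injective (Prod.ext h₁ h₂))
      exact Set.disjoint_left.1 (hCdisj _ _ h₂) hXi.2.2 hXj.2.2
    · exact Set.disjoint_left.1 (hBdisj _ _ h₁) hXi.2.1 hXj.2.1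
  · ext X
    simp only [Set.mem_iUnion, Block.mem_edges_append, Set.mem_ofPred_eq, ← hBunion, ← hCunion]
    constructor
    · rintro ⟨i, hX, hB, hC⟩
      exact ⟨hX, ⟨_, hB⟩, ⟨_, hC⟩⟩
    · rintro ⟨hX, ⟨i, hB⟩, ⟨j, hC⟩⟩
      exact ⟨e.symm (i, j), hX, by simpa using hB, by simpa using hC⟩

end ExactCover

lemma exactCover_f (r n : ℕ) :
    ExactCover (range n) r (f r n) {X | X ⊆ range n ∧ #X = r} :=
  Nat.sInf_mem (s := {k | ExactCover _ _ k _}) ⟨_, ExactCover.powersetCard (range n) r⟩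

lemma exists_embedding_map_range_card_eq (S : Finset ℕ) :
    ∃ g : ℕ ↪ ℕ, (range #S).map g = S := by
  let e : (range #S : Set ℕ) ↪ ℕ :=
    ⟨fun i => S.orderEmbOfFin rfl ⟨i, by simpa using i.2⟩, fun i j h =>
      Subtype.ext (Fin.ext_iff.1 ((S.orderEmbOfFin rfl).injective h))⟩
  obtain ⟨g, hg⟩ := Cardinal.extend_function_of_lt e (by simp) ⟨Equiv.refl ℕ⟩
  refine ⟨g.toEmbedding, eq_of_subset_of_card_le (fun y hy => ?_) (by simp)⟩
  obtain ⟨i, hi, rfl⟩ := mem_map.1 hy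
  exact (hg ⟨i, by simpa using hi⟩).symm ▸ S.orderEmbOfFin_mem rfl _

lemma image_map_setOf_subset_card_eq (g : ℕ ↪ ℕ) (V : Finset ℕ) (r : ℕ) :
    Finset.map g '' {X | X ⊆ V ∧ #X = r} = {Y | Y ⊆ V.map g ∧ #Y = r} := by
  ext Y
  constructor
  · rintro ⟨X, ⟨hXV, hX⟩, rfl⟩
    exact ⟨map_subset_map.2 hXV, (card_map g).trans hX⟩
  · rintro ⟨hYV, hY⟩
    obtain ⟨X, hXV, rfl⟩ := subset_map_iff.1 hYV
    exact ⟨X, ⟨hXV, (card_map g).symm.trans hY⟩, rfl⟩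

lemma exactCover_f_card (S : Finset ℕ) (r : ℕ) :
    ExactCover S r (f r #S) {X | X ⊆ S ∧ #X = r} := by
  obtain ⟨g, hg⟩ := exists_embedding_map_range_card_eq S
  have h := (exactCover_f r #S).map g
  rwa [image_map_setOf_subset_card_eq, hg] at h

theorem cover_product_family_general (S T : Finset ℕ) (hST : Disjoint S T) (a b : ℕ) :
    ∃ k ≤ f a S.card * f b T.card,
      ExactCover (S ∪ T) (a + b) k
        {X | X ⊆ S ∪ T ∧ (X ∩ S).card = a ∧ (X ∩ T).card = b} := by
  refine ⟨_, le_rfl, ?_⟩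
  convert (exactCover_f_card S a).append hST (exactCover_f_card T b) using 1
  ext X
  simp [inter_subset_right]

theorem cover_product_family (S T : Finset ℕ) (hST : Disjoint S T) (a b : ℕ)
    (ha : 1 ≤ a) (hb : 1 ≤ b) (haS : a ≤ S.card) (hbT : b ≤ T.card) :
    ∃ k ≤ f a S.card * f b T.card,
      ExactCover (S ∪ T) (a + b) k
        {X | X ⊆ S ∪ T ∧ (X ∩ S).card = a ∧ (X ∩ T).card = b} :=
  cover_product_family_general S T hST a b
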